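/- For every integer t ≥ 1, the weighted sum satisfies the lower bound 1/√t ≤ ∑_{i=1}^t α_t^i/√i. -/

import Mathlib

/-- The learning rate `α_t = (H+1)/(H+t)`. -/
noncomputable def lrate (H t : ℕ) : ℝ := (H + 1) / (H + t)

/-- The weight `α_t^i = α_i · ∏_{j=i+1}^t (1 − α_j)`. -/
noncomputable def lrateW (H t i : ℕ) : ℝ :=
  lrate H i * ∏ j ∈ Finset.Icc (i + 1) t, (1 - lrate H j)

/-! Since `α_1 = 1`, the weights `α_t^1, …, α_t^t` form a probability vector, so the weighted
average of the decreasing sequence `1/√i` is at least its last term `1/√t`. -/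

open Finset

lemma lrate_nonneg (H t : ℕ) : 0 ≤ lrate H t := by
  unfold lrate; positivity

lemma lrate_le_one (H : ℕ) {t : ℕ} (ht : 1 ≤ t) : lrate H t ≤ 1 := by
  unfold lrate
  rw [div_le_one (by positivity)]
  have : (1 : ℝ) ≤ t := by exact_mod_cast ht
  linarith

lemma lrate_one (H : ℕ) : lrate H 1 = 1 := by
  rw [lrate, Nat.cast_one]
  exact div_self (by positivity)

lemma lrateW_nonneg (H t : ℕ) {i : ℕ} (hi : 1 ≤ i) : 0 ≤ lrateW H t i := by
  refine mul_nonneg (lrate_nonneg H i) (prod_nonneg fun j hj => ?_)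
  have hj : 1 ≤ j := by have := (mem_Icc.mp hj).1; omega
  linarith [lrate_le_one H hj]

lemma lrateW_self (H t : ℕ) : lrateW H t t = lrate H t := by
  simp [lrateW]

lemma lrateW_succ (H : ℕ) {t i : ℕ} (hi : i ≤ t) :
    lrateW H (t + 1) i = lrateW H t i * (1 - lrate H (t + 1)) := by
  rw [lrateW, lrateW, prod_Icc_succ_top (by omega), mul_assoc]

lemma sum_lrateW (H : ℕ) {t : ℕ} (ht : 1 ≤ t) : ∑ i ∈ Icc 1 t, lrateW H t i = 1 := by
  induction t, ht using Nat.le_induction with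
  | base => simp [lrateW_self, lrate_one]
  | succ t ht ih =>
    have hprev : ∑ i ∈ Icc 1 t, lrateW H (t + 1) i = 1 - lrate H (t + 1) := by
      rw [sum_congr rfl fun i hi => lrateW_succ H (mem_Icc.mp hi).2, ← sum_mul, ih, one_mul]
    rw [sum_Icc_succ_top (by omega), hprev, lrateW_self]
    ring

theorem stmt_3_general (H : ℕ) (t : ℕ) (ht : 1 ≤ t) :
    1 / Real.sqrt t ≤ ∑ i ∈ Finset.Icc 1 t, lrateW H t i / Real.sqrt i := by
  have hterm : ∀ i ∈ Icc 1 t, lrateW H t i / Real.sqrt t ≤ lrateW H t i / Real.sqrt i := by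
    intro i hi
    obtain ⟨hi1, hit⟩ := mem_Icc.mp hi
    exact div_le_div_of_nonneg_left (lrateW_nonneg H t hi1)
      (Real.sqrt_pos.mpr (by exact_mod_cast hi1)) (Real.sqrt_le_sqrt (by exact_mod_cast hit))
  calc 1 / Real.sqrt t = (∑ i ∈ Icc 1 t, lrateW H t i) / Real.sqrt t := by rw [sum_lrateW H ht]
    _ = ∑ i ∈ Icc 1 t, lrateW H t i / Real.sqrt t := sum_div _ _ _
    _ ≤ _ := sum_le_sum hterm

theorem stmt_3 (H : ℕ) (hH : 1 ≤ H) (t : ℕ) (ht : 1 ≤ t) :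
    1 / Real.sqrt t ≤ ∑ i ∈ Finset.Icc 1 t, lrateW H t i / Real.sqrt i :=
  stmt_3_general H t ht
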